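/- Let N ≥ 1 be an integer, let t, r > 1 and 0 < λ < N be real numbers with 1/t + λ/N + 1/r = 2. Then there exists a constant C = C(t, N, λ, r) > 0 such that for every f ∈ L^t(ℝ^N) and every h ∈ L^r(ℝ^N), the double integral satisfies |∫_{ℝ^N} ∫_{ℝ^N} f(x) h(y) / |x − y|^λ dx dy| ≤ C ‖f‖_{L^t(ℝ^N)} ‖h‖_{L^r(ℝ^N)}. -/

import Mathlib

/-!
This is the layer-cake proof of Lieb and Loss. Writing `f` and `h` as integrals of the
indicators of their superlevel sets reduces the pairing to pairings of sets `A = {f > a}` and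
`B = {h > b}`. The superlevel sets of the kernel `|z|^{-λ}` are balls, so (bathtub principle)
`∫_B |x - y|^{-λ} dy ≤ C |B|^{1 - λ/N}`, and the pairing of `A` and `B` is at most both
`C |A| |B|^{1 - λ/N}` and `C |B| |A|^{1 - λ/N}`. For `‖f‖_t = ‖h‖_r = 1` Chebyshev gives
`|{f > a}| ≤ a^{-t}`. Splitting the quarter plane of heights along `a^t = b^r` and using on each
side the bound that carries the fractional power, each half integrates to a multiple of
`∫ |{h > b}| b^{r-1} db ≤ ‖h‖_r^r` (resp. of the same for `f`): the relation
`1/t + λ/N + 1/r = 2` is what turns `∫_0^{b^{r/t}} a^{-t(1-λ/N)} da` into a multiple of `b^{r-1}`.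
Homogeneity then gives the general case.
-/

open MeasureTheory Set Metric Module
open scoped ENNReal NNReal

section LayerCake

variable {α : Type*} [MeasurableSpace α] (μ : Measure α)

theorem lintegral_coe_mul_eq_lintegral_setLIntegral_lt [SFinite μ] {F : α → ℝ≥0}
    (hF : AEMeasurable F μ) {Φ : α → ℝ≥0∞} (hΦ : Measurable Φ) :
    ∫⁻ x, F x * Φ x ∂μ = ∫⁻ a in Ioi (0 : ℝ), ∫⁻ x in {x | a < F x}, Φ x ∂μ := by
  have hac := withDensity_absolutelyContinuous μ Φ
  have := lintegral_eq_lintegral_meas_lt (μ.withDensity Φ)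
    (Filter.Eventually.of_forall fun x => (F x).coe_nonneg)
    ((measurable_coe_nnreal_real.comp_aemeasurable hF).mono_ac hac)
  simp only [ENNReal.ofReal_coe_nnreal, withDensity_apply' _ _] at this
  rw [← this, lintegral_withDensity_eq_lintegral_mul₀' hΦ.aemeasurable
    (g := fun x => (F x : ℝ≥0∞)) (hF.coe_nnreal_ennreal.mono_ac hac)]
  simp only [Pi.mul_apply, mul_comm]

theorem meas_lt_rpow_le_rpow_neg {F : α → ℝ≥0} (hF : AEMeasurable F μ) {p γ a : ℝ}
    (hp : 0 < p) (hγ : 0 ≤ γ) (ha : 0 < a) (hF1 : ∫⁻ x, (F x : ℝ≥0∞) ^ p ∂μ ≤ 1) :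
    μ {x | a < F x} ^ γ ≤ ENNReal.ofReal (a ^ (-(p * γ))) := by
  have hcheb : μ {x | a < F x} ≤ ENNReal.ofReal a ^ (-p) :=
    calc μ {x | a < F x} ≤ μ {x | ENNReal.ofReal a ^ p ≤ (F x : ℝ≥0∞) ^ p} :=
          measure_mono fun x hx =>
            ENNReal.rpow_le_rpow (ENNReal.ofReal_le_of_le_toReal hx.le) hp.le
      _ ≤ (∫⁻ x, (F x : ℝ≥0∞) ^ p ∂μ) / ENNReal.ofReal a ^ p :=
          meas_ge_le_lintegral_div (by fun_prop) (by positivity) (by finiteness)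
      _ ≤ ENNReal.ofReal a ^ (-p) := by
          rw [ENNReal.rpow_neg, ENNReal.div_eq_inv_mul]
          exact mul_le_of_le_one_right' hF1
  calc μ {x | a < F x} ^ γ ≤ (ENNReal.ofReal a ^ (-p)) ^ γ := ENNReal.rpow_le_rpow hcheb hγ
    _ = ENNReal.ofReal (a ^ (-(p * γ))) := by
      rw [← ENNReal.rpow_mul, ENNReal.ofReal_rpow_of_pos ha, neg_mul]

theorem antitone_measure_lt (F : α → ℝ≥0) : Antitone fun a : ℝ => μ {x | a < F x} :=
  fun _ _ h => measure_mono fun _ hx => h.trans_lt hx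

theorem lintegral_meas_lt_mul_rpow_sub_one_le {F : α → ℝ≥0} (hF : AEMeasurable F μ) {p : ℝ}
    (hp : 1 ≤ p) :
    ∫⁻ a in Ioi (0 : ℝ), μ {x | a < F x} * ENNReal.ofReal (a ^ (p - 1)) ≤
      ∫⁻ x, (F x : ℝ≥0∞) ^ p ∂μ := by
  have hp0 : 0 < p := zero_lt_one.trans_le hp
  have := lintegral_rpow_eq_lintegral_meas_lt_mul μ (f := fun x => (F x : ℝ))
    (Filter.Eventually.of_forall fun x => (F x).coe_nonneg)
    (measurable_coe_nnreal_real.comp_aemeasurable hF) hp0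
  simp only [← ENNReal.ofReal_rpow_of_nonneg (F _).coe_nonneg hp0.le,
    ENNReal.ofReal_coe_nnreal] at this
  rw [this]
  exact le_mul_of_one_le_left' (ENNReal.one_le_ofReal.mpr hp)

theorem lintegral_enorm_rpow_eq_eLpNorm_rpow {G : Type*} [NormedAddCommGroup G] (f : α → G)
    {p : ℝ} (hp : 0 < p) :
    ∫⁻ x, ‖f x‖ₑ ^ p ∂μ = eLpNorm f (ENNReal.ofReal p) μ ^ p := by
  have := eLpNorm_nnreal_pow_eq_lintegral (μ := μ) (f := f) (p := p.toNNReal) (by simpa using hp)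
  rwa [Real.coe_toNNReal _ hp.le, eq_comm] at this

theorem MeasureTheory.MemLp.exists_eLpNorm_eq_one {G : Type*} [NormedAddCommGroup G]
    [NormedSpace ℝ G] {f : α → G} {p : ℝ≥0∞} (hf : MemLp f p μ) (hf0 : eLpNorm f p μ ≠ 0) :
    ∃ g : α → G, AEStronglyMeasurable g μ ∧ eLpNorm g p μ = 1 ∧
      ∀ x, ‖f x‖ₑ = eLpNorm f p μ * ‖g x‖ₑ := by
  set c := (eLpNorm f p μ).toReal
  have hc : ‖c‖ₑ = eLpNorm f p μ := by
    rw [Real.enorm_of_nonneg ENNReal.toReal_nonneg, ENNReal.ofReal_toReal hf.eLpNorm_ne_top]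
  have hc0 : c ≠ 0 := ENNReal.toReal_ne_zero.mpr ⟨hf0, hf.eLpNorm_ne_top⟩
  refine ⟨c⁻¹ • f, hf.1.const_smul _, ?_, fun x => ?_⟩
  · rw [eLpNorm_const_smul, enorm_inv hc0, hc, ENNReal.inv_mul_cancel hf0 hf.eLpNorm_ne_top]
  · rw [Pi.smul_apply, enorm_smul, enorm_inv hc0, hc, ← mul_assoc,
      ENNReal.mul_inv_cancel hf0 hf.eLpNorm_ne_top, one_mul]

end LayerCake

theorem lintegral_lintegral_const_mul_add {α β : Type*} [MeasurableSpace α] [MeasurableSpace β]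
    {μ : Measure α} {ν : Measure β} [SFinite ν] {X Y : α → β → ℝ≥0∞}
    (hX : Measurable (Function.uncurry X)) (hY : Measurable (Function.uncurry Y)) (C : ℝ≥0∞) :
    ∫⁻ a, ∫⁻ b, C * (X a b + Y a b) ∂ν ∂μ =
      C * ((∫⁻ a, ∫⁻ b, X a b ∂ν ∂μ) + ∫⁻ a, ∫⁻ b, Y a b ∂ν ∂μ) := by
  have hXa : ∀ a, Measurable (X a) := fun a => hX.comp measurable_prodMk_left
  have hYa : ∀ a, Measurable (Y a) := fun a => hY.comp measurable_prodMk_left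
  have hXi : Measurable fun a => ∫⁻ b, X a b ∂ν := hX.lintegral_prod_right'
  have hYi : Measurable fun a => ∫⁻ b, Y a b ∂ν := hY.lintegral_prod_right'
  calc _ = ∫⁻ a, C * ((∫⁻ b, X a b ∂ν) + ∫⁻ b, Y a b ∂ν) ∂μ := lintegral_congr fun a => by
        rw [lintegral_const_mul _ ((hXa a).fun_add (hYa a)), lintegral_add_left (hXa a)]
    _ = _ := by rw [lintegral_const_mul _ (hXi.fun_add hYi), lintegral_add_left hXi]

theorem setLIntegral_Ioc_rpow_neg {s c : ℝ} (hs : s < 1) (hc : 0 < c) :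
    ∫⁻ a in Ioc 0 c, ENNReal.ofReal (a ^ (-s)) = ENNReal.ofReal (c ^ (1 - s) / (1 - s)) := by
  rw [← ofReal_integral_eq_lintegral_ofReal
    (intervalIntegral.intervalIntegrable_rpow' (by linarith)).1
    ((ae_restrict_mem measurableSet_Ioc).mono fun a ha => Real.rpow_nonneg ha.1.le _),
    ← intervalIntegral.integral_of_le hc.le, integral_rpow (Or.inl (by linarith)),
    Real.zero_rpow (by linarith), sub_zero, neg_add_eq_sub]

theorem setLIntegral_Ioi_rpow_neg {q T : ℝ} (hq : 1 < q) (hT : 0 < T) :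
    ∫⁻ a in Ioi T, ENNReal.ofReal (a ^ (-q)) = ENNReal.ofReal (T ^ (1 - q) / (q - 1)) := by
  rw [← ofReal_integral_eq_lintegral_ofReal (integrableOn_Ioi_rpow_of_lt (by linarith) hT)
    ((ae_restrict_mem measurableSet_Ioi).mono fun a ha => Real.rpow_nonneg (hT.trans ha).le _),
    integral_Ioi_rpow_of_lt (by linarith) hT, neg_add_eq_sub, neg_div, ← div_neg, neg_sub]

theorem lintegral_Ioi_min_rpow_neg_le (V ω : ℝ≥0∞) {q T : ℝ} (hq : 1 < q) (hT : 0 < T) :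
    ∫⁻ a in Ioi (0 : ℝ), min V (ω * ENNReal.ofReal (a ^ (-q))) ≤
      V * ENNReal.ofReal T + ω * ENNReal.ofReal (T ^ (1 - q) / (q - 1)) := by
  rw [← Ioc_union_Ioi_eq_Ioi hT.le, lintegral_union measurableSet_Ioi (Ioc_disjoint_Ioi le_rfl)]
  gcongr
  · calc ∫⁻ a in Ioc 0 T, min V (ω * ENNReal.ofReal (a ^ (-q)))
        ≤ ∫⁻ _ in Ioc 0 T, V := lintegral_mono fun _ => min_le_left _ _
      _ = V * ENNReal.ofReal T := by rw [setLIntegral_const, Real.volume_Ioc, sub_zero]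
  · calc ∫⁻ a in Ioi T, min V (ω * ENNReal.ofReal (a ^ (-q)))
        ≤ ∫⁻ a in Ioi T, ω * ENNReal.ofReal (a ^ (-q)) := lintegral_mono fun _ => min_le_right _ _
      _ = ω * ENNReal.ofReal (T ^ (1 - q) / (q - 1)) := by
        rw [lintegral_const_mul _ (by fun_prop), setLIntegral_Ioi_rpow_neg hq hT]

theorem measurable_indicator_Ioc_rpow (κ s : ℝ) :
    Measurable fun p : ℝ × ℝ =>
      (Ioc 0 (p.2 ^ κ)).indicator (fun a => ENNReal.ofReal (a ^ (-s))) p.1 :=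
  Measurable.indicator (s := {p : ℝ × ℝ | p.1 ∈ Ioc 0 (p.2 ^ κ)}) (by fun_prop)
    ((measurableSet_lt measurable_const measurable_fst).inter
      (measurableSet_le measurable_fst (by fun_prop)))

theorem lintegral_mul_lintegral_indicator_Ioc_rpow_neg (w : ℝ → ℝ≥0∞) {κ s : ℝ} (hs : s < 1) :
    ∫⁻ b in Ioi (0 : ℝ), ∫⁻ a in Ioi (0 : ℝ),
        w b * (Ioc 0 (b ^ κ)).indicator (fun a => ENNReal.ofReal (a ^ (-s))) a =
      ENNReal.ofReal (1 / (1 - s)) *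
        ∫⁻ b in Ioi (0 : ℝ), w b * ENNReal.ofReal (b ^ (κ * (1 - s))) := by
  rw [← lintegral_const_mul' _ _ ENNReal.ofReal_ne_top]
  refine setLIntegral_congr_fun measurableSet_Ioi fun b hb => ?_
  rw [lintegral_const_mul _ (Measurable.indicator (by fun_prop) measurableSet_Ioc),
    lintegral_indicator measurableSet_Ioc, Measure.restrict_restrict measurableSet_Ioc,
    Ioc_inter_Ioi, max_self, setLIntegral_Ioc_rpow_neg hs (Real.rpow_pos_of_pos hb κ),
    ← Real.rpow_mul (le_of_lt hb), div_eq_mul_one_div,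
    ENNReal.ofReal_mul (Real.rpow_nonneg (le_of_lt hb) _)]
  ring

theorem lintegral_meas_lt_mul_lintegral_indicator_Ioc_le {α : Type*} [MeasurableSpace α]
    (μ : Measure α) {H : α → ℝ≥0} (hH : AEMeasurable H μ) {r κ s : ℝ} (hr : 1 ≤ r) (hs : s < 1)
    (hκ : κ * (1 - s) = r - 1) (hH1 : ∫⁻ y, (H y : ℝ≥0∞) ^ r ∂μ ≤ 1) :
    ∫⁻ b in Ioi (0 : ℝ), ∫⁻ a in Ioi (0 : ℝ),
        μ {y | b < H y} * (Ioc 0 (b ^ κ)).indicator (fun a => ENNReal.ofReal (a ^ (-s))) a ≤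
      ENNReal.ofReal (1 / (1 - s)) := by
  rw [lintegral_mul_lintegral_indicator_Ioc_rpow_neg _ hs, hκ]
  exact mul_le_of_le_one_right' ((lintegral_meas_lt_mul_rpow_sub_one_le μ hH hr).trans hH1)

theorem hls_exponents {t r θ : ℝ} (ht : 1 < t) (hr : 1 < r) (hsum : 1 / t + θ + 1 / r = 2) :
    t * (1 - θ) < 1 ∧ r / t * (1 - t * (1 - θ)) = r - 1 := by
  have h1 : 1 - t * (1 - θ) = t * (1 - 1 / r) := by
    rw [show 1 - θ = 1 / t + 1 / r - 1 by linarith]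
    field_simp
    ring
  refine ⟨?_, by rw [h1]; field_simp⟩
  have : 0 < t * (1 - 1 / r) :=
    mul_pos (by linarith) (sub_pos.mpr ((div_lt_one (by linarith)).mpr hr))
  linarith

section Pairing

variable {E : Type*} [NormedAddCommGroup E] [MeasurableSpace E] (μ : Measure E) (lam : ℝ)

/-- The kernel vanishes on the diagonal (`0 ^ (-λ) = 0` for real powers), matching the
convention `f x * h y / 0 = 0` of the Bochner double integral it dominates. -/
noncomputable def rieszPairing (F H : E → ℝ≥0∞) : ℝ≥0∞ :=
  ∫⁻ x, ∫⁻ y, F x * ENNReal.ofReal (‖x - y‖ ^ (-lam)) * H y ∂μ ∂μ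

theorem rieszPairing_congr_ae {F F' H H' : E → ℝ≥0∞} (hF : F =ᵐ[μ] F') (hH : H =ᵐ[μ] H') :
    rieszPairing μ lam F H = rieszPairing μ lam F' H' :=
  lintegral_congr_ae <| hF.mono fun x hx =>
    lintegral_congr_ae <| hH.mono fun y hy => by simp only [hx, hy]

theorem rieszPairing_eq_zero_of_left {F : E → ℝ≥0∞} (hF : F =ᵐ[μ] 0) (H : E → ℝ≥0∞) :
    rieszPairing μ lam F H = 0 :=
  (lintegral_congr_ae <| hF.mono fun x hx => by simp [hx]).trans lintegral_zero

theorem rieszPairing_eq_zero_of_right (F : E → ℝ≥0∞) {H : E → ℝ≥0∞} (hH : H =ᵐ[μ] 0) :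
    rieszPairing μ lam F H = 0 :=
  (lintegral_congr fun x =>
    (lintegral_congr_ae <| hH.mono fun y hy => by simp [hy]).trans lintegral_zero).trans
    lintegral_zero

theorem rieszPairing_const_mul {c d : ℝ≥0∞} (hc : c ≠ ⊤) (hd : d ≠ ⊤) (F H : E → ℝ≥0∞) :
    rieszPairing μ lam (fun x => c * F x) (fun y => d * H y) = c * d * rieszPairing μ lam F H := by
  simp only [rieszPairing]
  rw [← lintegral_const_mul' _ _ (ENNReal.mul_ne_top hc hd)]
  refine lintegral_congr fun x => ?_
  rw [← lintegral_const_mul' _ _ (ENNReal.mul_ne_top hc hd)]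
  exact lintegral_congr fun y => by ring

theorem enorm_integral_integral_le_rieszPairing (f h : E → ℝ) :
    ‖∫ x, ∫ y, f x * h y / ‖x - y‖ ^ lam ∂μ ∂μ‖ₑ ≤ rieszPairing μ lam (‖f ·‖ₑ) (‖h ·‖ₑ) := by
  have hpt : ∀ x y, ‖f x * h y / ‖x - y‖ ^ lam‖ₑ =
      ‖f x‖ₑ * ENNReal.ofReal (‖x - y‖ ^ (-lam)) * ‖h y‖ₑ := fun x y => by
    rw [← Real.enorm_of_nonneg (by positivity), ← enorm_mul, ← enorm_mul,
      Real.rpow_neg (norm_nonneg _), div_eq_mul_inv, mul_right_comm]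
  calc _ ≤ ∫⁻ x, ‖∫ y, f x * h y / ‖x - y‖ ^ lam ∂μ‖ₑ ∂μ := enorm_integral_le_lintegral_enorm _
    _ ≤ ∫⁻ x, ∫⁻ y, ‖f x * h y / ‖x - y‖ ^ lam‖ₑ ∂μ ∂μ :=
        lintegral_mono fun x => enorm_integral_le_lintegral_enorm _
    _ = _ := by simp_rw [hpt]; rfl

variable {μ lam} in
theorem measurable_setLIntegral_superlevel [BorelSpace E] [SecondCountableTopology E] [SFinite μ]
    {H : E → ℝ≥0} (hH : Measurable H) :
    Measurable fun p : E × ℝ =>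
      ∫⁻ y in {y | p.2 < H y}, ENNReal.ofReal (‖p.1 - y‖ ^ (-lam)) ∂μ := by
  have hS : MeasurableSet {q : (E × ℝ) × E | q.1.2 < H q.2} :=
    measurableSet_lt (by fun_prop) (by fun_prop)
  have hK : Measurable fun q : (E × ℝ) × E => ENNReal.ofReal (‖q.1.1 - q.2‖ ^ (-lam)) := by
    fun_prop
  convert (hK.indicator hS).lintegral_prod_right' (ν := μ) using 2 with p
  exact (lintegral_indicator (measurableSet_lt measurable_const (by fun_prop)) _).symm

theorem rieszPairing_eq_lintegral_superlevel [BorelSpace E] [SecondCountableTopology E]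
    [SFinite μ] {F H : E → ℝ≥0} (hF : Measurable F) (hH : Measurable H) :
    rieszPairing μ lam (fun x => F x) (fun y => H y) =
      ∫⁻ a in Ioi (0 : ℝ), ∫⁻ b in Ioi (0 : ℝ), ∫⁻ x in {x | a < F x},
        ∫⁻ y in {y | b < H y}, ENNReal.ofReal (‖x - y‖ ^ (-lam)) ∂μ ∂μ := by
  have hΨ := measurable_setLIntegral_superlevel (μ := μ) (lam := lam) hH
  have hinner : ∀ x, ∫⁻ y, F x * ENNReal.ofReal (‖x - y‖ ^ (-lam)) * H y ∂μ =
      F x * ∫⁻ b in Ioi (0 : ℝ), ∫⁻ y in {y | b < H y}, ENNReal.ofReal (‖x - y‖ ^ (-lam)) ∂μ := by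
    intro x
    simp_rw [mul_assoc, mul_comm (ENNReal.ofReal _)]
    rw [lintegral_const_mul' _ _ ENNReal.coe_ne_top,
      lintegral_coe_mul_eq_lintegral_setLIntegral_lt μ hH.aemeasurable (by fun_prop)]
  simp_rw [rieszPairing, hinner]
  rw [lintegral_coe_mul_eq_lintegral_setLIntegral_lt μ hF.aemeasurable
    (hΨ.lintegral_prod_right' (ν := volume.restrict (Ioi 0)))]
  refine lintegral_congr fun a => lintegral_lintegral_swap ?_
  exact (hΨ.comp (measurable_fst.prodMk measurable_snd)).aemeasurable

end Pairing

section Constants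

variable {E : Type*} [NormedAddCommGroup E] [NormedSpace ℝ E] [MeasurableSpace E] (μ : Measure E)

noncomputable def rieszConst (lam : ℝ) : ℝ≥0∞ :=
  1 + μ (ball 0 1) * ENNReal.ofReal (lam / (finrank ℝ E - lam))

noncomputable def hlsConst (t r lam : ℝ) : ℝ≥0∞ :=
  rieszConst μ lam * (ENNReal.ofReal (1 / (1 - t * (1 - lam / finrank ℝ E))) +
    ENNReal.ofReal (1 / (1 - r * (1 - lam / finrank ℝ E))))

theorem hlsConst_ne_top [FiniteDimensional ℝ E] [IsFiniteMeasureOnCompacts μ] (t r lam : ℝ) :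
    hlsConst μ t r lam ≠ ⊤ := by
  have : μ (ball 0 1) ≠ ⊤ := measure_ball_lt_top.ne
  unfold hlsConst rieszConst
  finiteness

end Constants

section RieszKernel

variable {E : Type*} [NormedAddCommGroup E] [NormedSpace ℝ E] [MeasurableSpace E] [BorelSpace E]
  [FiniteDimensional ℝ E] (μ : Measure E) [μ.IsAddHaarMeasure]

theorem measure_lt_rpow_neg_norm_sub_le (x : E) {lam a : ℝ} (hlam : 0 < lam) (ha : 0 < a) :
    μ {y | a < ‖x - y‖ ^ (-lam)} ≤ μ (ball 0 1) * ENNReal.ofReal (a ^ (-(finrank ℝ E / lam))) := by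
  have hρ : 0 < a ^ (-lam)⁻¹ := Real.rpow_pos_of_pos ha _
  have hsub : {y | a < ‖x - y‖ ^ (-lam)} ⊆ ball x (a ^ (-lam)⁻¹) := by
    intro y hy
    rw [mem_ball, dist_comm, dist_eq_norm]
    rcases (norm_nonneg (x - y)).eq_or_lt with h0 | h0
    · exact h0 ▸ hρ
    · exact (Real.lt_rpow_inv_iff_of_neg h0 ha (neg_lt_zero.mpr hlam)).mpr hy
  calc μ {y | a < ‖x - y‖ ^ (-lam)} ≤ μ (ball x (a ^ (-lam)⁻¹)) := measure_mono hsub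
    _ = μ (ball 0 1) * ENNReal.ofReal (a ^ (-(finrank ℝ E / lam))) := by
      rw [Measure.addHaar_ball_of_pos μ x hρ, mul_comm, ← Real.rpow_natCast,
        ← Real.rpow_mul ha.le, inv_neg, neg_mul, inv_mul_eq_div]

theorem setLIntegral_rpow_neg_norm_sub_le {lam : ℝ} (hlam0 : 0 < lam)
    (hlamN : lam < finrank ℝ E) (x : E) (S : Set E) :
    ∫⁻ y in S, ENNReal.ofReal (‖x - y‖ ^ (-lam)) ∂μ ≤
      rieszConst μ lam * μ S ^ (1 - lam / finrank ℝ E) := by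
  set N : ℝ := (finrank ℝ E : ℝ)
  have hN : 0 < N := hlam0.trans hlamN
  have hθ : 0 < 1 - lam / N := sub_pos.mpr ((div_lt_one hN).mpr hlamN)
  rcases eq_or_ne (μ S) ⊤ with hS | hS
  · rw [hS, ENNReal.top_rpow_of_pos hθ, ENNReal.mul_top (by simp [rieszConst])]
    exact le_top
  rcases eq_or_ne (μ S) 0 with hS0 | hS0
  · simp [Measure.restrict_eq_zero.mpr hS0]
  set v := (μ S).toReal
  have hv : 0 < v := ENNReal.toReal_pos hS0 hS
  -- The superlevel sets of the kernel are balls; cutting the layer-cake integral at height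
  -- `μ S ^ (-λ/N)` makes both pieces a multiple of `μ S ^ (1 - λ/N)`.
  calc ∫⁻ y in S, ENNReal.ofReal (‖x - y‖ ^ (-lam)) ∂μ
      = ∫⁻ a in Ioi (0 : ℝ), μ.restrict S {y | a < ‖x - y‖ ^ (-lam)} :=
        lintegral_eq_lintegral_meas_lt _ (Filter.Eventually.of_forall fun y => by positivity)
          (by fun_prop)
    _ ≤ ∫⁻ a in Ioi (0 : ℝ), min (μ S) (μ (ball 0 1) * ENNReal.ofReal (a ^ (-(N / lam)))) := by
        refine setLIntegral_mono' measurableSet_Ioi fun a ha => le_min ?_ ?_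
        · exact (measure_mono (subset_univ _)).trans_eq (Measure.restrict_apply_univ S)
        · exact (Measure.restrict_le_self _).trans (measure_lt_rpow_neg_norm_sub_le μ x hlam0 ha)
    _ ≤ μ S * ENNReal.ofReal (v ^ (-(lam / N))) + μ (ball 0 1) *
          ENNReal.ofReal ((v ^ (-(lam / N))) ^ (1 - N / lam) / (N / lam - 1)) :=
        lintegral_Ioi_min_rpow_neg_le _ _ ((one_lt_div hlam0).mpr hlamN)
          (Real.rpow_pos_of_pos hv _)
    _ = rieszConst μ lam * μ S ^ (1 - lam / N) := by
        have h1 : v * v ^ (-(lam / N)) = v ^ (1 - lam / N) := by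
          rw [sub_eq_add_neg, Real.rpow_add hv, Real.rpow_one]
        have h2 : (v ^ (-(lam / N))) ^ (1 - N / lam) / (N / lam - 1) =
            lam / (N - lam) * v ^ (1 - lam / N) := by
          rw [← Real.rpow_mul hv.le]
          field_simp
          ring_nf
        rw [rieszConst, ← ENNReal.ofReal_toReal hS, ← ENNReal.ofReal_mul hv.le, h1, h2,
          ENNReal.ofReal_mul (by positivity), ENNReal.ofReal_rpow_of_nonneg hv.le hθ.le]
        ring

theorem setLIntegral_setLIntegral_rpow_neg_norm_sub_le {lam : ℝ} (hlam0 : 0 < lam)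
    (hlamN : lam < finrank ℝ E) (A B : Set E) :
    ∫⁻ x in A, ∫⁻ y in B, ENNReal.ofReal (‖x - y‖ ^ (-lam)) ∂μ ∂μ ≤
      rieszConst μ lam * (μ A * μ B ^ (1 - lam / finrank ℝ E)) :=
  calc ∫⁻ x in A, ∫⁻ y in B, ENNReal.ofReal (‖x - y‖ ^ (-lam)) ∂μ ∂μ
      ≤ ∫⁻ _ in A, rieszConst μ lam * μ B ^ (1 - lam / finrank ℝ E) ∂μ :=
        lintegral_mono fun x => setLIntegral_rpow_neg_norm_sub_le μ hlam0 hlamN x B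
    _ = rieszConst μ lam * (μ A * μ B ^ (1 - lam / finrank ℝ E)) := by
        rw [setLIntegral_const, mul_comm (μ A), mul_assoc]

theorem setLIntegral_setLIntegral_rpow_neg_norm_sub_le' {lam : ℝ} (hlam0 : 0 < lam)
    (hlamN : lam < finrank ℝ E) (A B : Set E) :
    ∫⁻ x in A, ∫⁻ y in B, ENNReal.ofReal (‖x - y‖ ^ (-lam)) ∂μ ∂μ ≤
      rieszConst μ lam * (μ B * μ A ^ (1 - lam / finrank ℝ E)) := by
  rw [lintegral_lintegral_swap (by fun_prop)]
  simp_rw [norm_sub_rev]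
  exact setLIntegral_setLIntegral_rpow_neg_norm_sub_le μ hlam0 hlamN B A

theorem setLIntegral_setLIntegral_superlevel_le {F H : E → ℝ≥0} (hF : AEMeasurable F μ)
    (hH : AEMeasurable H μ) {t r lam : ℝ} (ht : 0 < t) (hr : 0 < r) (hlam0 : 0 < lam)
    (hlamN : lam < finrank ℝ E) (hF1 : ∫⁻ x, (F x : ℝ≥0∞) ^ t ∂μ ≤ 1)
    (hH1 : ∫⁻ y, (H y : ℝ≥0∞) ^ r ∂μ ≤ 1) {a b : ℝ} (ha : 0 < a) (hb : 0 < b) :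
    ∫⁻ x in {x | a < F x}, ∫⁻ y in {y | b < H y}, ENNReal.ofReal (‖x - y‖ ^ (-lam)) ∂μ ∂μ ≤
      rieszConst μ lam *
        (μ {y | b < H y} * (Ioc 0 (b ^ (r / t))).indicator
            (fun a => ENNReal.ofReal (a ^ (-(t * (1 - lam / finrank ℝ E))))) a +
          μ {x | a < F x} * (Ioc 0 (a ^ (t / r))).indicator
            (fun b => ENNReal.ofReal (b ^ (-(r * (1 - lam / finrank ℝ E))))) b) := by
  have hθ : 0 ≤ 1 - lam / finrank ℝ E :=
    sub_nonneg.mpr ((div_le_one (hlam0.trans hlamN)).mpr hlamN.le)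
  rcases le_or_gt a (b ^ (r / t)) with hab | hba
  · rw [indicator_of_mem (show a ∈ Ioc 0 (b ^ (r / t)) from ⟨ha, hab⟩)]
    exact (setLIntegral_setLIntegral_rpow_neg_norm_sub_le' μ hlam0 hlamN _ _).trans
      (mul_le_mul_right (le_add_right
        (mul_le_mul_right (meas_lt_rpow_le_rpow_neg μ hF ht hθ ha hF1) _)) _)
  · have hba' : b ≤ a ^ (t / r) :=
      calc b = (b ^ (r / t)) ^ (t / r) := by
            rw [← Real.rpow_mul hb.le, div_mul_div_cancel₀ ht.ne', div_self hr.ne', Real.rpow_one]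
        _ ≤ a ^ (t / r) := by gcongr
    rw [indicator_of_mem (show b ∈ Ioc 0 (a ^ (t / r)) from ⟨hb, hba'⟩)]
    exact (setLIntegral_setLIntegral_rpow_neg_norm_sub_le μ hlam0 hlamN _ _).trans
      (mul_le_mul_right (le_add_left
        (mul_le_mul_right (meas_lt_rpow_le_rpow_neg μ hH hr hθ hb hH1) _)) _)

theorem rieszPairing_le_hlsConst {F H : E → ℝ≥0} (hF : Measurable F) (hH : Measurable H)
    {t r lam : ℝ} (ht : 1 < t) (hr : 1 < r) (hlam0 : 0 < lam) (hlamN : lam < finrank ℝ E)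
    (hsum : 1 / t + lam / finrank ℝ E + 1 / r = 2)
    (hF1 : ∫⁻ x, (F x : ℝ≥0∞) ^ t ∂μ ≤ 1) (hH1 : ∫⁻ y, (H y : ℝ≥0∞) ^ r ∂μ ≤ 1) :
    rieszPairing μ lam (fun x => F x) (fun y => H y) ≤ hlsConst μ t r lam := by
  set θ := lam / finrank ℝ E
  obtain ⟨hs₁, hκ₁⟩ := hls_exponents ht hr hsum
  obtain ⟨hs₂, hκ₂⟩ := hls_exponents hr ht (θ := θ) (by linarith)
  set X : ℝ → ℝ → ℝ≥0∞ := fun a b => μ {y | b < H y} *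
    (Ioc 0 (b ^ (r / t))).indicator (fun a => ENNReal.ofReal (a ^ (-(t * (1 - θ))))) a
  set Y : ℝ → ℝ → ℝ≥0∞ := fun a b => μ {x | a < F x} *
    (Ioc 0 (a ^ (t / r))).indicator (fun b => ENNReal.ofReal (b ^ (-(r * (1 - θ))))) b
  have hX : Measurable (Function.uncurry X) :=
    ((antitone_measure_lt μ H).measurable.comp measurable_snd).mul
      (measurable_indicator_Ioc_rpow _ _)
  have hY : Measurable (Function.uncurry Y) :=
    ((antitone_measure_lt μ F).measurable.comp measurable_fst).mul
      ((measurable_indicator_Ioc_rpow _ _).comp measurable_swap)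
  have hXint : ∫⁻ a in Ioi (0 : ℝ), ∫⁻ b in Ioi (0 : ℝ), X a b ≤
      ENNReal.ofReal (1 / (1 - t * (1 - θ))) := by
    rw [lintegral_lintegral_swap hX.aemeasurable]
    exact lintegral_meas_lt_mul_lintegral_indicator_Ioc_le μ hH.aemeasurable hr.le hs₁ hκ₁ hH1
  have hYint : ∫⁻ a in Ioi (0 : ℝ), ∫⁻ b in Ioi (0 : ℝ), Y a b ≤
      ENNReal.ofReal (1 / (1 - r * (1 - θ))) :=
    lintegral_meas_lt_mul_lintegral_indicator_Ioc_le μ hF.aemeasurable ht.le hs₂ hκ₂ hF1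
  calc rieszPairing μ lam (fun x => F x) (fun y => H y)
      ≤ ∫⁻ a in Ioi (0 : ℝ), ∫⁻ b in Ioi (0 : ℝ), rieszConst μ lam * (X a b + Y a b) := by
        rw [rieszPairing_eq_lintegral_superlevel μ lam hF hH]
        exact setLIntegral_mono' measurableSet_Ioi fun a ha =>
          setLIntegral_mono' measurableSet_Ioi fun b hb =>
            setLIntegral_setLIntegral_superlevel_le μ hF.aemeasurable hH.aemeasurable
              (by linarith) (by linarith) hlam0 hlamN hF1 hH1 ha hb
    _ = rieszConst μ lam * ((∫⁻ a in Ioi (0 : ℝ), ∫⁻ b in Ioi (0 : ℝ), X a b) +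
          ∫⁻ a in Ioi (0 : ℝ), ∫⁻ b in Ioi (0 : ℝ), Y a b) :=
        lintegral_lintegral_const_mul_add hX hY _
    _ ≤ hlsConst μ t r lam := by rw [hlsConst]; gcongr

theorem rieszPairing_enorm_le_hlsConst {G : Type*} [NormedAddCommGroup G] {f h : E → G}
    {t r lam : ℝ} (ht : 1 < t) (hr : 1 < r) (hlam0 : 0 < lam) (hlamN : lam < finrank ℝ E)
    (hsum : 1 / t + lam / finrank ℝ E + 1 / r = 2)
    (hf : AEStronglyMeasurable f μ) (hh : AEStronglyMeasurable h μ)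
    (hf1 : eLpNorm f (ENNReal.ofReal t) μ ≤ 1) (hh1 : eLpNorm h (ENNReal.ofReal r) μ ≤ 1) :
    rieszPairing μ lam (‖f ·‖ₑ) (‖h ·‖ₑ) ≤ hlsConst μ t r lam := by
  rw [eLpNorm_congr_ae hf.ae_eq_mk] at hf1
  rw [eLpNorm_congr_ae hh.ae_eq_mk] at hh1
  refine (rieszPairing_congr_ae μ lam (hf.ae_eq_mk.fun_comp enorm)
    (hh.ae_eq_mk.fun_comp enorm)).trans_le (rieszPairing_le_hlsConst μ
      hf.stronglyMeasurable_mk.nnnorm.measurable hh.stronglyMeasurable_mk.nnnorm.measurable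
      ht hr hlam0 hlamN hsum
    ((lintegral_enorm_rpow_eq_eLpNorm_rpow μ _ (by linarith)).trans_le
      (ENNReal.rpow_le_one hf1 (by linarith)))
    ((lintegral_enorm_rpow_eq_eLpNorm_rpow μ _ (by linarith)).trans_le
      (ENNReal.rpow_le_one hh1 (by linarith))))

theorem rieszPairing_enorm_le {G : Type*} [NormedAddCommGroup G] [NormedSpace ℝ G] {f h : E → G}
    {t r lam : ℝ} (ht : 1 < t) (hr : 1 < r) (hlam0 : 0 < lam) (hlamN : lam < finrank ℝ E)
    (hsum : 1 / t + lam / finrank ℝ E + 1 / r = 2)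
    (hf : MemLp f (ENNReal.ofReal t) μ) (hh : MemLp h (ENNReal.ofReal r) μ) :
    rieszPairing μ lam (‖f ·‖ₑ) (‖h ·‖ₑ) ≤
      hlsConst μ t r lam * eLpNorm f (ENNReal.ofReal t) μ * eLpNorm h (ENNReal.ofReal r) μ := by
  rcases eq_or_ne (eLpNorm f (ENNReal.ofReal t) μ) 0 with hf0 | hf0
  · rw [rieszPairing_eq_zero_of_left μ lam (((eLpNorm_eq_zero_iff hf.1 (by simp; linarith)).mp
      hf0).mono fun x hx => by simp [hx])]
    exact zero_le
  rcases eq_or_ne (eLpNorm h (ENNReal.ofReal r) μ) 0 with hh0 | hh0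
  · rw [rieszPairing_eq_zero_of_right μ lam _ (((eLpNorm_eq_zero_iff hh.1 (by simp; linarith)).mp
      hh0).mono fun x hx => by simp [hx])]
    exact zero_le
  obtain ⟨f₁, hf₁, hf₁1, hff₁⟩ := hf.exists_eLpNorm_eq_one μ hf0
  obtain ⟨h₁, hh₁, hh₁1, hhh₁⟩ := hh.exists_eLpNorm_eq_one μ hh0
  calc rieszPairing μ lam (‖f ·‖ₑ) (‖h ·‖ₑ)
      = eLpNorm f (ENNReal.ofReal t) μ * eLpNorm h (ENNReal.ofReal r) μ *
          rieszPairing μ lam (‖f₁ ·‖ₑ) (‖h₁ ·‖ₑ) := by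
        simp_rw [hff₁, hhh₁]
        exact rieszPairing_const_mul μ lam hf.eLpNorm_ne_top hh.eLpNorm_ne_top _ _
    _ ≤ eLpNorm f (ENNReal.ofReal t) μ * eLpNorm h (ENNReal.ofReal r) μ * hlsConst μ t r lam := by
        gcongr
        exact rieszPairing_enorm_le_hlsConst μ ht hr hlam0 hlamN hsum hf₁ hh₁ hf₁1.le hh₁1.le
    _ = _ := by ring

end RieszKernel

theorem hardy_littlewood_sobolev_general (N : ℕ) (t r lam : ℝ)
    (ht : 1 < t) (hr : 1 < r) (hlam0 : 0 < lam) (hlamN : lam < N)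
    (hsum : 1 / t + lam / N + 1 / r = 2) :
    ∃ C > 0, ∀ f h : EuclideanSpace ℝ (Fin N) → ℝ,
      MemLp f (ENNReal.ofReal t) volume → MemLp h (ENNReal.ofReal r) volume →
      |∫ x, ∫ y, f x * h y / ‖x - y‖ ^ lam| ≤
        C * (eLpNorm f (ENNReal.ofReal t) volume).toReal *
          (eLpNorm h (ENNReal.ofReal r) volume).toReal := by
  have hN : (finrank ℝ (EuclideanSpace ℝ (Fin N)) : ℝ) = N := by rw [finrank_euclideanSpace_fin]
  set K := hlsConst (volume : Measure (EuclideanSpace ℝ (Fin N))) t r lam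
  refine ⟨K.toReal + 1, by positivity, fun f h hf hh => ?_⟩
  have hbound : ENNReal.ofReal |∫ x, ∫ y, f x * h y / ‖x - y‖ ^ lam| ≤
      K * eLpNorm f (ENNReal.ofReal t) volume * eLpNorm h (ENNReal.ofReal r) volume := by
    rw [← Real.enorm_eq_ofReal_abs]
    exact (enorm_integral_integral_le_rieszPairing volume lam f h).trans
      (rieszPairing_enorm_le volume ht hr hlam0 (by rwa [hN]) (by rwa [hN]) hf hh)
  have hfin : K * eLpNorm f (ENNReal.ofReal t) volume * eLpNorm h (ENNReal.ofReal r) volume ≠ ⊤ :=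
    ENNReal.mul_ne_top (ENNReal.mul_ne_top (hlsConst_ne_top _ t r lam) hf.eLpNorm_ne_top)
      hh.eLpNorm_ne_top
  calc |∫ x, ∫ y, f x * h y / ‖x - y‖ ^ lam|
      ≤ K.toReal * (eLpNorm f (ENNReal.ofReal t) volume).toReal *
          (eLpNorm h (ENNReal.ofReal r) volume).toReal := by
        simpa only [ENNReal.toReal_mul] using (ENNReal.ofReal_le_iff_le_toReal hfin).mp hbound
    _ ≤ _ := by gcongr; linarith

/-- **Classical Hardy–Littlewood–Sobolev inequality.**
Let `N ≥ 1`, `t, r > 1` and `0 < lam < N` with `1/t + lam/N + 1/r = 2`. Then there is a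
constant `C > 0` such that for all `f ∈ L^t(ℝ^N)` and `h ∈ L^r(ℝ^N)`,
`|∬ f(x) h(y) / |x - y|^lam| ≤ C ‖f‖_t ‖h‖_r`. -/
theorem hardy_littlewood_sobolev (N : ℕ) (hN : 1 ≤ N) (t r lam : ℝ)
    (ht : 1 < t) (hr : 1 < r) (hlam0 : 0 < lam) (hlamN : lam < N)
    (hsum : 1 / t + lam / N + 1 / r = 2) :
    ∃ C > 0, ∀ f h : EuclideanSpace ℝ (Fin N) → ℝ,
      MemLp f (ENNReal.ofReal t) volume → MemLp h (ENNReal.ofReal r) volume →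
      |∫ x, ∫ y, f x * h y / ‖x - y‖ ^ lam| ≤
        C * (eLpNorm f (ENNReal.ofReal t) volume).toReal *
          (eLpNorm h (ENNReal.ofReal r) volume).toReal :=
  hardy_littlewood_sobolev_general N t r lam ht hr hlam0 hlamN hsum
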